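/- All three cubic lattices in ℝ³ (fcc Γ_F, primitive Γ_P = ℤ³, bcc Γ_B, realized so that Γ_F ⊂ Γ_P ⊂ Γ_B with index 2 each) assign the same coincidence index to every R ∈ O(3,ℚ): Σ_F(R) = Σ_P(R) = Σ_B(R). -/

import Mathlib

/-- The standard hypercubic lattice `ℤ^d` inside `ℝ^d`. -/
def Zd (d : ℕ) : AddSubgroup (Fin d → ℝ) :=
  AddSubgroup.pi Set.univ fun _ => AddSubgroup.zmultiples (1 : ℝ)

/-- The dual lattice `Γ* = {x | ⟨x,y⟩ ∈ ℤ for all y ∈ Γ}`. -/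
def dualLattice {d : ℕ} (Γ : AddSubgroup (Fin d → ℝ)) : AddSubgroup (Fin d → ℝ) where
  carrier := {x | ∀ y ∈ Γ, ∃ n : ℤ, dotProduct x y = (n : ℝ)}
  zero_mem' := by
    intro y _
    exact ⟨0, by simp⟩
  add_mem' := by
    intro a b ha hb y hy
    obtain ⟨n, hn⟩ := ha y hy
    obtain ⟨m, hm⟩ := hb y hy
    exact ⟨n + m, by rw [add_dotProduct, hn, hm]; push_cast; ring⟩
  neg_mem' := by
    intro a ha y hy
    obtain ⟨n, hn⟩ := ha y hy
    exact ⟨-n, by rw [neg_dotProduct, hn]; push_cast; ring⟩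

/-- `Γ` is a (full-rank) lattice in `ℝ^d`: the `ℤ`-span of an `ℝ`-basis. -/
def IsLattice {d : ℕ} (Γ : AddSubgroup (Fin d → ℝ)) : Prop :=
  ∃ b : Module.Basis (Fin d) ℝ (Fin d → ℝ), Γ = (Submodule.span ℤ (Set.range ⇑b)).toAddSubgroup

/-- Two lattices are commensurate if their intersection has finite index in both. -/
def Commensurate {d : ℕ} (Γ₁ Γ₂ : AddSubgroup (Fin d → ℝ)) : Prop :=
  (Γ₁ ⊓ Γ₂).relIndex Γ₁ ≠ 0 ∧ (Γ₁ ⊓ Γ₂).relIndex Γ₂ ≠ 0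

/-- The image `RΓ` of a lattice under a matrix `R`. -/
def latmap {d : ℕ} (R : Matrix (Fin d) (Fin d) ℝ) (Γ : AddSubgroup (Fin d → ℝ)) :
    AddSubgroup (Fin d → ℝ) :=
  Γ.map R.mulVecLin.toAddMonoidHom

/-- The face-centred cubic lattice: integer vectors with even coordinate sum. -/
def GammaF : AddSubgroup (Fin 3 → ℝ) where
  carrier := {x | (∀ i, ∃ z : ℤ, x i = (z : ℝ)) ∧ ∃ z : ℤ, x 0 + x 1 + x 2 = 2 * (z : ℝ)}
  zero_mem' := ⟨fun _ => ⟨0, by simp⟩, ⟨0, by simp⟩⟩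
  add_mem' := by
    rintro a b ⟨ha, za, hza⟩ ⟨hb, zb, hzb⟩
    refine ⟨fun i => ?_, ⟨za + zb, ?_⟩⟩
    · obtain ⟨z, hz⟩ := ha i
      obtain ⟨w, hw⟩ := hb i
      exact ⟨z + w, by simp [hz, hw]⟩
    · have : (a + b) 0 + (a + b) 1 + (a + b) 2 = (a 0 + a 1 + a 2) + (b 0 + b 1 + b 2) := by
        simp [Pi.add_apply]; ring
      rw [this, hza, hzb]; push_cast; ring
  neg_mem' := by
    rintro a ⟨ha, za, hza⟩
    refine ⟨fun i => ?_, ⟨-za, ?_⟩⟩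
    · obtain ⟨z, hz⟩ := ha i
      exact ⟨-z, by simp [hz]⟩
    · have : (-a) 0 + (-a) 1 + (-a) 2 = -(a 0 + a 1 + a 2) := by simp; ring
      rw [this, hza]; push_cast; ring

/-- The body-centred cubic lattice: generated by `ℤ³` and `(1/2, 1/2, 1/2)`. -/
noncomputable def GammaB : AddSubgroup (Fin 3 → ℝ) :=
  Zd 3 ⊔ AddSubgroup.zmultiples ![(1 : ℝ)/2, 1/2, 1/2]

/-!
Let `Γ ⊂ Λ` be either `Γ_F ⊂ Γ_P` or `Γ_P ⊂ Γ_B`. Since `R` preserves the squared norm,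
`Γ ∩ RΛ ⊆ RΓ`: for `Γ_F ⊂ Γ_P` because `‖z‖² ≡ ∑ zᵢ (mod 2)` on `ℤ³`, for `Γ_P ⊂ Γ_B` because
twice a point of `ℤ³ + (½,½,½)` has odd coordinates, and a sum of three odd squares is not
divisible by `4`. Hence `Γ ∩ RΓ = (Λ ∩ RΛ) ∩ Γ`, and as `[Λ : Γ] = 2` this intersection has index
`[Λ : Λ ∩ RΛ]` in `Γ` once `Λ ∩ RΛ ⊄ Γ`. Witnesses for the latter are `q e₀` and `q (½,½,½)`,
where `q` is an odd integer with `qR` integral; the least such `q` is odd by the same three-squares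
argument, applied to the columns of `qR`, whose squared norms are `q²`.
-/

open Matrix

noncomputable def coincidenceIndex {d : ℕ} (R : Matrix (Fin d) (Fin d) ℝ)
    (Γ : AddSubgroup (Fin d → ℝ)) : ℕ :=
  (Γ ⊓ latmap R Γ).relIndex Γ

namespace AddSubgroup

variable {G : Type*} [AddGroup G] {H K L : AddSubgroup G}

theorem relIndex_eq_two_of_le_of_not_le (hLK : L ≤ K) (h2 : H.relIndex K = 2)
    (hLH : ¬ L ≤ H) : H.relIndex L = 2 := by
  obtain ⟨a, haL, haH⟩ := SetLike.not_le_iff_exists.mp hLH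
  refine relIndex_eq_two_iff_exists_notMem_and.mpr ⟨a, haL, haH, fun b hb => ?_⟩
  have := add_mem_iff_of_index_two h2 (a := ⟨b, hLK hb⟩) (b := ⟨a, hLK haL⟩)
  simp only [mem_addSubgroupOf, coe_add] at this
  tauto

theorem relIndex_eq_relIndex_of_relIndex_eq_two (hHK : H ≤ K) (hLK : L ≤ K)
    (h2 : H.relIndex K = 2) (hLH : ¬ L ≤ H) : L.relIndex H = L.relIndex K := by
  have hL := relIndex_inf_mul_relIndex L H K
  have hH := relIndex_inf_mul_relIndex H L K
  rw [inf_of_le_left hHK, h2] at hL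
  rw [inf_of_le_left hLK, relIndex_eq_two_of_le_of_not_le hLK h2 hLH, inf_comm] at hH
  omega

end AddSubgroup

theorem even_sum_sq_iff {ι : Type*} [Fintype ι] (z : ι → ℤ) :
    Even (∑ i, z i ^ 2) ↔ Even (∑ i, z i) := by
  rw [← Int.even_sub, ← Finset.sum_sub_distrib, even_iff_two_dvd]
  exact Finset.dvd_sum fun i _ => by
    simpa [sq, mul_sub] using (Int.even_mul_pred_self (z i)).two_dvd

theorem even_of_four_dvd_sum_sq (z : Fin 3 → ℤ) (h : 4 ∣ ∑ i, z i ^ 2) (i : Fin 3) :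
    Even (z i) := by
  have hsq : ∀ j, z j ^ 2 % 4 = 0 ∨ z j ^ 2 % 4 = 1 := fun j => by
    rcases Int.even_or_odd (z j) with ⟨k, hk⟩ | hodd
    · left; rw [hk]; ring_nf; omega
    · exact Or.inr (Int.sq_mod_four_eq_one_of_odd hodd)
  by_contra hi
  have h1 := Int.sq_mod_four_eq_one_of_odd (Int.not_even_iff_odd.mp hi)
  rw [Fin.sum_univ_three] at h
  have := hsq 0; have := hsq 1; have := hsq 2
  fin_cases i <;> simp only [Fin.zero_eta, Fin.mk_one, Fin.reduceFinMk, Fin.isValue] at h1 <;> omega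

def IsIntegralMultiple {d : ℕ} (q : ℕ) (R : Matrix (Fin d) (Fin d) ℝ) : Prop :=
  ∃ A : Matrix (Fin d) (Fin d) ℤ, ∀ i j, (A i j : ℝ) = q * R i j

section General

variable {d : ℕ} {R : Matrix (Fin d) (Fin d) ℝ}

theorem coincidenceIndex_eq_of_relIndex_eq_two {Γ Λ : AddSubgroup (Fin d → ℝ)} (hΓΛ : Γ ≤ Λ)
    (h2 : Γ.relIndex Λ = 2) (hsat : Γ ⊓ latmap R Λ ≤ latmap R Γ) (hΛ : ¬ Λ ⊓ latmap R Λ ≤ Γ) :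
    coincidenceIndex R Γ = coincidenceIndex R Λ := by
  have heq : Γ ⊓ latmap R Γ = (Λ ⊓ latmap R Λ) ⊓ Γ :=
    le_antisymm (le_inf (inf_le_inf hΓΛ (AddSubgroup.map_mono hΓΛ)) inf_le_left)
      fun x hx => ⟨hx.2, hsat ⟨hx.2, hx.1.2⟩⟩
  rw [coincidenceIndex, heq, AddSubgroup.inf_relIndex_right]
  exact AddSubgroup.relIndex_eq_relIndex_of_relIndex_eq_two hΓΛ inf_le_left h2 hΛ

theorem mem_latmap_iff (hR : R ∈ orthogonalGroup (Fin d) ℝ) {Γ : AddSubgroup (Fin d → ℝ)}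
    {x : Fin d → ℝ} : x ∈ latmap R Γ ↔ Rᵀ *ᵥ x ∈ Γ := by
  constructor
  · rintro ⟨y, hy, rfl⟩
    simpa [mulVec_mulVec, (mem_orthogonalGroup_iff' (Fin d) ℝ).mp hR] using hy
  · exact fun h => ⟨Rᵀ *ᵥ x, h, by simp [mulVec_mulVec, (mem_orthogonalGroup_iff (Fin d) ℝ).mp hR]⟩

theorem dotProduct_transpose_mulVec_self (hR : R ∈ orthogonalGroup (Fin d) ℝ) (x : Fin d → ℝ) :
    Rᵀ *ᵥ x ⬝ᵥ Rᵀ *ᵥ x = x ⬝ᵥ x := by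
  rw [dotProduct_mulVec, vecMul_transpose, mulVec_mulVec,
    (mem_orthogonalGroup_iff (Fin d) ℝ).mp hR, one_mulVec]

theorem sum_sq_col_eq_one (hR : R ∈ orthogonalGroup (Fin d) ℝ) (i : Fin d) :
    ∑ j, R j i ^ 2 = 1 := by
  simpa [mul_apply, sq] using congrFun₂ ((mem_orthogonalGroup_iff' (Fin d) ℝ).mp hR) i i

theorem mem_Zd_iff {x : Fin d → ℝ} : x ∈ Zd d ↔ ∃ z : Fin d → ℤ, x = (↑) ∘ z := by
  simp only [Zd, AddSubgroup.mem_pi, Set.mem_univ, true_implies, AddSubgroup.mem_zmultiples_iff,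
    zsmul_eq_mul, mul_one, funext_iff, Function.comp_apply, eq_comm (a := x _)]
  exact Classical.skolem

theorem sum_sq_eq_of_transpose_mulVec_eq (hR : R ∈ orthogonalGroup (Fin d) ℝ) {z w : Fin d → ℤ}
    (h : Rᵀ *ᵥ ((↑) ∘ z) = (↑) ∘ w) : ∑ i, w i ^ 2 = ∑ i, z i ^ 2 := by
  have := dotProduct_transpose_mulVec_self hR ((↑) ∘ z)
  rw [h] at this
  have h' : ((∑ i, w i ^ 2 : ℤ) : ℝ) = ((∑ i, z i ^ 2 : ℤ) : ℝ) := by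
    push_cast
    simpa [dotProduct, sq] using this
  exact_mod_cast h'

theorem exists_isIntegralMultiple_of_rat (hrat : ∀ i j, ∃ r : ℚ, R i j = r) :
    ∃ n ≠ 0, IsIntegralMultiple n R := by
  choose r hr using hrat
  set n := ∏ i, ∏ j, (r i j).den
  have hint : ∀ i j, ∃ a : ℤ, (a : ℝ) = n * R i j := by
    intro i j
    obtain ⟨k, hk⟩ : (r i j).den ∣ n :=
      (Finset.dvd_prod_of_mem (fun j => (r i j).den) (Finset.mem_univ j)).trans
        (Finset.dvd_prod_of_mem (fun i => ∏ j, (r i j).den) (Finset.mem_univ i))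
    refine ⟨k * (r i j).num, ?_⟩
    have hq : (k * (r i j).num : ℚ) = ((r i j).den * k : ℕ) * r i j := by
      rw [← Rat.den_mul_eq_num]
      push_cast
      ring
    rw [hk, hr]
    exact_mod_cast hq
  choose A hA using hint
  exact ⟨n, Finset.prod_ne_zero_iff.mpr fun i _ => Finset.prod_ne_zero_iff.mpr fun j _ =>
    (r i j).den_nz, A, hA⟩

theorem sum_sq_col_eq_of_intCast_eq (hR : R ∈ orthogonalGroup (Fin d) ℝ) {q : ℕ}
    {A : Matrix (Fin d) (Fin d) ℤ} (hA : ∀ i j, (A i j : ℝ) = q * R i j) (i : Fin d) :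
    ∑ j, A j i ^ 2 = (q : ℤ) ^ 2 := by
  have h : ((∑ j, A j i ^ 2 : ℤ) : ℝ) = (((q : ℤ) ^ 2 : ℤ) : ℝ) := by
    push_cast
    simp_rw [hA, mul_pow, ← Finset.mul_sum, sum_sq_col_eq_one hR i, mul_one]
  exact_mod_cast h

end General

section Cubic

variable {R : Matrix (Fin 3) (Fin 3) ℝ}

theorem mem_GammaF_iff {x : Fin 3 → ℝ} :
    x ∈ GammaF ↔ ∃ z : Fin 3 → ℤ, x = (↑) ∘ z ∧ Even (∑ i, z i) := by
  simp only [GammaF, AddSubgroup.mem_mk]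
  show ((∀ i, ∃ z : ℤ, x i = z) ∧ ∃ m : ℤ, x 0 + x 1 + x 2 = 2 * m) ↔ _
  rw [Classical.skolem]
  constructor
  · rintro ⟨⟨z, hz⟩, m, hm⟩
    obtain rfl : x = (↑) ∘ z := funext hz
    refine ⟨z, rfl, m, ?_⟩
    simp only [Function.comp_apply, Fin.sum_univ_three] at hm ⊢
    rw [← two_mul]
    exact_mod_cast hm
  · rintro ⟨z, rfl, m, hm⟩
    refine ⟨⟨z, fun _ => rfl⟩, m, ?_⟩
    simp only [Function.comp_apply]
    rw [Fin.sum_univ_three] at hm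
    rw [two_mul]
    exact_mod_cast hm

theorem intCast_comp_mem_GammaF_iff {z : Fin 3 → ℤ} :
    ((↑) ∘ z : Fin 3 → ℝ) ∈ GammaF ↔ Even (∑ i, z i) := by
  rw [mem_GammaF_iff]
  constructor
  · rintro ⟨w, hw, hsum⟩
    rwa [Int.cast_injective.comp_left hw]
  · exact fun h => ⟨z, rfl, h⟩

theorem GammaF_le_Zd : GammaF ≤ Zd 3 := fun x hx => by
  obtain ⟨z, rfl, -⟩ := mem_GammaF_iff.mp hx
  exact mem_Zd_iff.mpr ⟨z, rfl⟩

theorem relIndex_GammaF_Zd : GammaF.relIndex (Zd 3) = 2 := by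
  set e : Fin 3 → ℤ := Pi.single 0 1
  refine AddSubgroup.relIndex_eq_two_iff_exists_notMem_and.mpr
    ⟨(↑) ∘ e, mem_Zd_iff.mpr ⟨e, rfl⟩, ?_, fun b hb => ?_⟩
  · simp [intCast_comp_mem_GammaF_iff, e]
  · obtain ⟨z, rfl⟩ := mem_Zd_iff.mp hb
    have hadd : ((↑) ∘ z + (↑) ∘ e : Fin 3 → ℝ) = (↑) ∘ (z + e) := by ext; simp
    rw [hadd, intCast_comp_mem_GammaF_iff, intCast_comp_mem_GammaF_iff]
    simpa [e, Finset.sum_add_distrib] using (Int.even_or_odd _).symm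

theorem GammaF_inf_latmap_Zd_le (hR : R ∈ orthogonalGroup (Fin 3) ℝ) :
    GammaF ⊓ latmap R (Zd 3) ≤ latmap R GammaF := by
  intro x hx
  obtain ⟨hx, hRx⟩ := AddSubgroup.mem_inf.mp hx
  rw [mem_latmap_iff hR] at hRx ⊢
  obtain ⟨z, rfl, hz⟩ := mem_GammaF_iff.mp hx
  obtain ⟨w, hw⟩ := mem_Zd_iff.mp hRx
  rw [hw, intCast_comp_mem_GammaF_iff, ← even_sum_sq_iff, sum_sq_eq_of_transpose_mulVec_eq hR hw,
    even_sum_sq_iff]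
  exact hz

noncomputable def bodyCentre : Fin 3 → ℝ := fun _ => 1 / 2

theorem GammaB_eq_sup : GammaB = Zd 3 ⊔ AddSubgroup.zmultiples bodyCentre := by
  rw [GammaB]
  congr
  ext i
  fin_cases i <;> simp [bodyCentre]

theorem two_zsmul_bodyCentre_mem_Zd : (2 : ℤ) • bodyCentre ∈ Zd 3 :=
  mem_Zd_iff.mpr ⟨1, by ext; simp [bodyCentre]⟩

theorem bodyCentre_notMem_Zd : bodyCentre ∉ Zd 3 := fun h => by
  obtain ⟨z, hz⟩ := mem_Zd_iff.mp h
  have h0 : (2 * z 0 : ℝ) = 1 := by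
    rw [← Function.comp_apply (f := Int.cast) (x := 0), ← hz, bodyCentre]; norm_num
  have : 2 * z 0 = 1 := by exact_mod_cast h0
  omega

theorem mem_GammaB_iff {x : Fin 3 → ℝ} : x ∈ GammaB ↔ x ∈ Zd 3 ∨ x + bodyCentre ∈ Zd 3 := by
  rw [GammaB_eq_sup]
  constructor
  · rw [AddSubgroup.mem_sup]
    rintro ⟨y, hy, _, ⟨k, rfl⟩, rfl⟩
    dsimp only
    obtain ⟨m, rfl | rfl⟩ := Int.even_or_odd' k
    · left
      rw [mul_comm, mul_zsmul]
      exact add_mem hy (zsmul_mem two_zsmul_bodyCentre_mem_Zd m)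
    · right
      rw [show y + (2 * m + 1) • bodyCentre + bodyCentre = y + (m + 1) • (2 : ℤ) • bodyCentre by
        module]
      exact add_mem hy (zsmul_mem two_zsmul_bodyCentre_mem_Zd _)
  · rintro (h | h)
    · exact AddSubgroup.mem_sup_left h
    · rw [← add_sub_cancel_right x bodyCentre]
      exact sub_mem (AddSubgroup.mem_sup_left h)
        (AddSubgroup.mem_sup_right (AddSubgroup.mem_zmultiples _))

theorem Zd_le_GammaB : Zd 3 ≤ GammaB := fun _ hx => mem_GammaB_iff.mpr (Or.inl hx)

theorem relIndex_Zd_GammaB : (Zd 3).relIndex GammaB = 2 :=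
  AddSubgroup.relIndex_eq_two_iff_exists_notMem_and.mpr
    ⟨bodyCentre, GammaB_eq_sup ▸ AddSubgroup.mem_sup_right (AddSubgroup.mem_zmultiples _),
      bodyCentre_notMem_Zd, fun _ hb => (mem_GammaB_iff.mp hb).symm⟩

theorem Zd_inf_latmap_GammaB_le (hR : R ∈ orthogonalGroup (Fin 3) ℝ) :
    Zd 3 ⊓ latmap R GammaB ≤ latmap R (Zd 3) := by
  intro x hx
  obtain ⟨hx, hRx⟩ := AddSubgroup.mem_inf.mp hx
  rw [mem_latmap_iff hR] at hRx ⊢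
  refine (mem_GammaB_iff.mp hRx).resolve_right fun h => ?_
  obtain ⟨z, rfl⟩ := mem_Zd_iff.mp hx
  obtain ⟨w, hw⟩ := mem_Zd_iff.mp h
  -- `2 Rᵀ x` has odd coordinates but squared norm `4 ‖x‖²`
  have hodd : Rᵀ *ᵥ ((↑) ∘ (2 * z)) = (↑) ∘ (2 * w - 1) := by
    have hcast : ((↑) ∘ (2 * z) : Fin 3 → ℝ) = (2 : ℝ) • ((↑) ∘ z) := by ext; simp
    rw [hcast, mulVec_smul, eq_sub_of_add_eq hw]
    ext
    simp only [Pi.smul_apply, Pi.sub_apply, Function.comp_apply, bodyCentre, one_div, smul_eq_mul,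
      Pi.mul_apply, Pi.ofNat_apply, Int.cast_sub, Int.cast_mul, Int.cast_ofNat,
      Int.cast_one]
    ring
  have h4 : 4 ∣ ∑ i, (2 * w - 1) i ^ 2 := by
    rw [sum_sq_eq_of_transpose_mulVec_eq hR hodd]
    exact Finset.dvd_sum fun i _ => ⟨z i ^ 2, by simp; ring⟩
  have := even_of_four_dvd_sum_sq _ h4 0
  simp only [Pi.sub_apply, Pi.mul_apply, Pi.ofNat_apply, even_sub_one] at this
  exact Int.not_odd_iff_even.mpr (even_two_mul _) this

theorem IsIntegralMultiple.of_two_mul (hR : R ∈ orthogonalGroup (Fin 3) ℝ) {r : ℕ}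
    (h : IsIntegralMultiple (2 * r) R) : IsIntegralMultiple r R := by
  obtain ⟨A, hA⟩ := h
  have heven : ∀ i j, Even (A i j) := fun i j =>
    even_of_four_dvd_sum_sq (fun k => A k j)
      ⟨(r : ℤ) ^ 2, by rw [sum_sq_col_eq_of_intCast_eq hR hA j]; push_cast; ring⟩ i
  choose B hB using heven
  refine ⟨B, fun i j => ?_⟩
  have := hA i j
  rw [hB] at this
  push_cast at this
  linarith

theorem exists_odd_isIntegralMultiple (hR : R ∈ orthogonalGroup (Fin 3) ℝ)
    (hrat : ∀ i j, ∃ r : ℚ, R i j = r) : ∃ q, Odd q ∧ IsIntegralMultiple q R := by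
  obtain ⟨n, hn, hA⟩ := exists_isIntegralMultiple_of_rat hrat
  obtain ⟨k, m, hm, rfl⟩ := Nat.exists_eq_two_pow_mul_odd hn
  refine ⟨m, hm, ?_⟩
  clear hn
  induction k with
  | zero => simpa using hA
  | succ k ih => exact ih (.of_two_mul hR (by rwa [pow_succ', mul_assoc] at hA))

theorem not_Zd_inf_latmap_le_GammaF (hR : R ∈ orthogonalGroup (Fin 3) ℝ) {q : ℕ}
    (hq : Odd q) (hqR : IsIntegralMultiple q R) : ¬ Zd 3 ⊓ latmap R (Zd 3) ≤ GammaF := by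
  obtain ⟨A, hA⟩ := hqR
  set e : Fin 3 → ℤ := Pi.single 0 q
  have hmem : ((↑) ∘ e : Fin 3 → ℝ) ∈ Zd 3 ⊓ latmap R (Zd 3) := by
    refine ⟨mem_Zd_iff.mpr ⟨e, rfl⟩, (mem_latmap_iff hR).mpr (mem_Zd_iff.mpr ⟨A 0, ?_⟩)⟩
    ext i
    simp [e, mulVec, dotProduct, Fin.sum_univ_three, hA, mul_comm]
  intro hle
  have he := intCast_comp_mem_GammaF_iff.mp (hle hmem)
  simp only [e, Finset.sum_pi_single', Finset.mem_univ, if_true] at he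
  exact Nat.not_even_iff_odd.mpr hq (by exact_mod_cast he)

theorem not_GammaB_inf_latmap_le_Zd (hR : R ∈ orthogonalGroup (Fin 3) ℝ) {q : ℕ}
    (hq : Odd q) (hqR : IsIntegralMultiple q R) : ¬ GammaB ⊓ latmap R GammaB ≤ Zd 3 := by
  obtain ⟨A, hA⟩ := hqR
  have hcol : ∀ i, Odd (∑ j, A j i) := fun i => by
    rw [← Int.not_even_iff_odd, ← even_sum_sq_iff, sum_sq_col_eq_of_intCast_eq hR hA i,
      Int.not_even_iff_odd]
    exact_mod_cast hq.pow
  choose t ht using hcol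
  have hcentre : bodyCentre ∈ GammaB :=
    GammaB_eq_sup ▸ AddSubgroup.mem_sup_right (AddSubgroup.mem_zmultiples _)
  have hmem : (q : ℤ) • bodyCentre ∈ GammaB ⊓ latmap R GammaB := by
    refine ⟨zsmul_mem hcentre _, (mem_latmap_iff hR).mpr
      (mem_GammaB_iff.mpr (Or.inr (mem_Zd_iff.mpr ⟨t + 1, ?_⟩)))⟩
    ext i
    have hsum : ∑ j, (A j i : ℝ) = 2 * t i + 1 := by exact_mod_cast ht i
    simp only [hA] at hsum
    simp only [Fin.sum_univ_three, zsmul_eq_mul, Int.cast_natCast, Pi.add_apply, mulVec,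
      dotProduct, transpose_apply, Pi.mul_apply, Pi.natCast_apply, bodyCentre, one_div,
      Function.comp_apply, Pi.one_apply, Int.cast_add, Int.cast_one] at hsum ⊢
    linear_combination (1 / 2 : ℝ) * hsum
  intro hle
  obtain ⟨m, rfl⟩ := hq
  apply bodyCentre_notMem_Zd
  rw [show bodyCentre = ((2 * m + 1 : ℕ) : ℤ) • bodyCentre - (m : ℤ) • (2 : ℤ) • bodyCentre by
    push_cast; module]
  exact sub_mem (hle hmem) (zsmul_mem two_zsmul_bodyCentre_mem_Zd _)

end Cubic

/-- All three cubic lattices (fcc `Γ_F ⊂ Γ_P = ℤ³ ⊂ Γ_B` bcc, each of index 2) assign the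
same coincidence index to every `R ∈ O(3,ℚ)`. -/
theorem stmt16 (R : Matrix (Fin 3) (Fin 3) ℝ)
    (hR : R ∈ Matrix.orthogonalGroup (Fin 3) ℝ)
    (hrat : ∀ i j, ∃ q : ℚ, R i j = (q : ℝ)) :
    (GammaF ⊓ latmap R GammaF).relIndex GammaF =
      (Zd 3 ⊓ latmap R (Zd 3)).relIndex (Zd 3) ∧
    (Zd 3 ⊓ latmap R (Zd 3)).relIndex (Zd 3) =
      (GammaB ⊓ latmap R GammaB).relIndex GammaB := by
  obtain ⟨q, hq, hqR⟩ := exists_odd_isIntegralMultiple hR hrat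
  exact ⟨coincidenceIndex_eq_of_relIndex_eq_two GammaF_le_Zd relIndex_GammaF_Zd
      (GammaF_inf_latmap_Zd_le hR) (not_Zd_inf_latmap_le_GammaF hR hq hqR),
    coincidenceIndex_eq_of_relIndex_eq_two Zd_le_GammaB relIndex_Zd_GammaB
      (Zd_inf_latmap_GammaB_le hR) (not_GammaB_inf_latmap_le_Zd hR hq hqR)⟩
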